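/- Let $\bar{X}, X \in \mathbb{R}^{t \times r}$, $\rho > 0$, and define $\bar{\Omega} = \rho I + \bar{X}^\top \bar{X}$, $\Omega = \rho I + X^\top X$, and $\Xi = X - \bar{X}$. Then for every $a \in \mathbb{R}^r$: $|a^\top(\bar{\Omega} - \Omega)a| \leq \frac{2}{\sqrt{\rho}}\,\|a\|_{\Omega}^2\,\|\Xi\| + \frac{1}{\rho}\,\|a\|_{\Omega}^2\,\|\Xi\|^2$. -/

import Mathlib

open Matrix

/-- Spectral (operator) norm of a real matrix, viewed as the operator norm of the
induced linear map between Euclidean spaces. -/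
noncomputable def opNorm {n m : ℕ} (A : Matrix (Fin n) (Fin m) ℝ) : ℝ :=
  ‖LinearMap.toContinuousLinearMap (Matrix.toEuclideanLin A)‖

/-- Euclidean norm of a vector. -/
noncomputable def vecNorm {d : ℕ} (a : Fin d → ℝ) : ℝ := Real.sqrt (a ⬝ᵥ a)

/-- Weighted norm `‖a‖_Ω = sqrt (aᵀ Ω a)`. -/
noncomputable def wnorm {r : ℕ} (Ω : Matrix (Fin r) (Fin r) ℝ) (a : Fin r → ℝ) : ℝ :=
  Real.sqrt (a ⬝ᵥ (Ω *ᵥ a))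

/-- `k`-th largest singular value of a matrix, characterized as the distance (in the
spectral norm) to the set of matrices of rank `< k` (approximation numbers). -/
noncomputable def singVal {n m : ℕ} (k : ℕ) (A : Matrix (Fin n) (Fin m) ℝ) : ℝ :=
  sInf {c | ∃ B : Matrix (Fin n) (Fin m) ℝ, B.rank < k ∧ c = opNorm (A - B)}

/-!
Write `u = X a` and `w = Ξ a`, so that `X̄ a = u - w`. The ridge terms cancel and
`aᵀ(Ω̄ - Ω)a = ‖w‖² - 2⟪u, w⟫`. Both `ρ‖a‖²` and `‖u‖²` are bounded by `‖a‖_Ω²`, hence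
`‖w‖ ≤ ‖Ξ‖ ‖a‖ ≤ ‖Ξ‖ ‖a‖_Ω / √ρ` and `‖u‖ ≤ ‖a‖_Ω`; Cauchy–Schwarz finishes the bound.
-/

section VecNorm

variable {d : ℕ}

lemma vecNorm_eq_norm_toLp (a : Fin d → ℝ) : vecNorm a = ‖WithLp.toLp 2 a‖ := by
  rw [vecNorm, EuclideanSpace.norm_eq]
  simp [dotProduct, sq]

lemma vecNorm_nonneg (a : Fin d → ℝ) : 0 ≤ vecNorm a := Real.sqrt_nonneg _

lemma vecNorm_sq (a : Fin d → ℝ) : vecNorm a ^ 2 = a ⬝ᵥ a := by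
  rw [vecNorm, Real.sq_sqrt]
  simpa using dotProduct_star_self_nonneg a

lemma abs_dotProduct_le_vecNorm_mul (u v : Fin d → ℝ) : |u ⬝ᵥ v| ≤ vecNorm u * vecNorm v := by
  simpa [vecNorm_eq_norm_toLp, EuclideanSpace.inner_eq_star_dotProduct, dotProduct_comm] using
    abs_real_inner_le_norm (WithLp.toLp 2 u) (WithLp.toLp 2 v)

lemma vecNorm_mulVec_le_opNorm_mul {m : ℕ} (A : Matrix (Fin m) (Fin d) ℝ) (a : Fin d → ℝ) :
    vecNorm (A *ᵥ a) ≤ opNorm A * vecNorm a := by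
  rw [vecNorm_eq_norm_toLp, vecNorm_eq_norm_toLp]
  exact (LinearMap.toContinuousLinearMap (Matrix.toEuclideanLin A)).le_opNorm (WithLp.toLp 2 a)

end VecNorm

section Gram

variable {t r : ℕ}

lemma wnorm_nonneg (Ω : Matrix (Fin r) (Fin r) ℝ) (a : Fin r → ℝ) : 0 ≤ wnorm Ω a :=
  Real.sqrt_nonneg _

lemma dotProduct_transpose_mul_self_mulVec (B : Matrix (Fin t) (Fin r) ℝ) (a : Fin r → ℝ) :
    a ⬝ᵥ ((Bᵀ * B) *ᵥ a) = (B *ᵥ a) ⬝ᵥ (B *ᵥ a) := by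
  rw [← mulVec_mulVec, dotProduct_mulVec, vecMul_transpose]

lemma wnorm_ridge_sq {ρ : ℝ} (hρ : 0 ≤ ρ) (X : Matrix (Fin t) (Fin r) ℝ) (a : Fin r → ℝ) :
    wnorm (ρ • 1 + Xᵀ * X) a ^ 2 = ρ * vecNorm a ^ 2 + vecNorm (X *ᵥ a) ^ 2 := by
  have hquad : a ⬝ᵥ ((ρ • 1 + Xᵀ * X) *ᵥ a) = ρ * vecNorm a ^ 2 + vecNorm (X *ᵥ a) ^ 2 := by
    rw [add_mulVec, smul_mulVec, one_mulVec, dotProduct_add, dotProduct_smul, smul_eq_mul,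
      dotProduct_transpose_mul_self_mulVec, vecNorm_sq, vecNorm_sq]
  rw [wnorm, hquad, Real.sq_sqrt (by positivity)]

lemma sqrt_mul_vecNorm_le_wnorm_ridge {ρ : ℝ} (hρ : 0 ≤ ρ) (X : Matrix (Fin t) (Fin r) ℝ)
    (a : Fin r → ℝ) : Real.sqrt ρ * vecNorm a ≤ wnorm (ρ • 1 + Xᵀ * X) a := by
  refine (pow_le_pow_iff_left₀ (mul_nonneg (Real.sqrt_nonneg _) (vecNorm_nonneg _))
    (wnorm_nonneg _ _) two_ne_zero).mp ?_
  rw [wnorm_ridge_sq hρ, mul_pow, Real.sq_sqrt hρ]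
  exact le_add_of_nonneg_right (sq_nonneg _)

lemma vecNorm_mulVec_le_wnorm_ridge {ρ : ℝ} (hρ : 0 ≤ ρ) (X : Matrix (Fin t) (Fin r) ℝ)
    (a : Fin r → ℝ) : vecNorm (X *ᵥ a) ≤ wnorm (ρ • 1 + Xᵀ * X) a := by
  refine (pow_le_pow_iff_left₀ (vecNorm_nonneg _) (wnorm_nonneg _ _) two_ne_zero).mp ?_
  rw [wnorm_ridge_sq hρ]
  exact le_add_of_nonneg_left (by positivity)

lemma abs_dotProduct_gram_sub_gram_mulVec_le (X Ξ : Matrix (Fin t) (Fin r) ℝ) (a : Fin r → ℝ) :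
    |a ⬝ᵥ (((X - Ξ)ᵀ * (X - Ξ) - Xᵀ * X) *ᵥ a)| ≤
      vecNorm (Ξ *ᵥ a) ^ 2 + 2 * (vecNorm (X *ᵥ a) * vecNorm (Ξ *ᵥ a)) := by
  have hquad : a ⬝ᵥ (((X - Ξ)ᵀ * (X - Ξ) - Xᵀ * X) *ᵥ a) =
      (Ξ *ᵥ a) ⬝ᵥ (Ξ *ᵥ a) - 2 * ((X *ᵥ a) ⬝ᵥ (Ξ *ᵥ a)) := by
    rw [sub_mulVec, dotProduct_sub, dotProduct_transpose_mul_self_mulVec,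
      dotProduct_transpose_mul_self_mulVec, sub_mulVec]
    simp only [dotProduct_sub, sub_dotProduct, dotProduct_comm (Ξ *ᵥ a) (X *ᵥ a)]
    ring
  rw [hquad, ← vecNorm_sq]
  calc |vecNorm (Ξ *ᵥ a) ^ 2 - 2 * ((X *ᵥ a) ⬝ᵥ (Ξ *ᵥ a))|
      ≤ |vecNorm (Ξ *ᵥ a) ^ 2| + |2 * ((X *ᵥ a) ⬝ᵥ (Ξ *ᵥ a))| := abs_sub _ _
    _ ≤ _ := by
      rw [abs_of_nonneg (sq_nonneg _), abs_mul, abs_two]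
      gcongr
      exact abs_dotProduct_le_vecNorm_mul _ _

end Gram

/-- quadratic-form perturbation bound between the two precision
matrices. -/
theorem stmt_17 {t r : ℕ} (Xbar X : Matrix (Fin t) (Fin r) ℝ) (ρ : ℝ) (hρ : 0 < ρ)
    (Ωbar Ω : Matrix (Fin r) (Fin r) ℝ) (Ξ : Matrix (Fin t) (Fin r) ℝ)
    (hΩbar : Ωbar = ρ • (1 : Matrix (Fin r) (Fin r) ℝ) + Xbarᵀ * Xbar)
    (hΩ : Ω = ρ • (1 : Matrix (Fin r) (Fin r) ℝ) + Xᵀ * X)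
    (hΞ : Ξ = X - Xbar) :
    ∀ a : Fin r → ℝ,
      |a ⬝ᵥ ((Ωbar - Ω) *ᵥ a)| ≤
        2 / Real.sqrt ρ * (wnorm Ω a) ^ 2 * opNorm Ξ
          + 1 / ρ * (wnorm Ω a) ^ 2 * (opNorm Ξ) ^ 2 := by
  intro a
  obtain rfl : Xbar = X - Ξ := by rw [hΞ, sub_sub_cancel]
  subst hΩbar hΩ
  set W := wnorm (ρ • 1 + Xᵀ * X) a
  have hs : 0 < Real.sqrt ρ := Real.sqrt_pos.mpr hρ
  have hu : vecNorm (X *ᵥ a) ≤ W := vecNorm_mulVec_le_wnorm_ridge hρ.le X a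
  have hw : vecNorm (Ξ *ᵥ a) ≤ opNorm Ξ * (W / Real.sqrt ρ) :=
    (vecNorm_mulVec_le_opNorm_mul Ξ a).trans <| mul_le_mul_of_nonneg_left
      ((le_div_iff₀' hs).mpr (sqrt_mul_vecNorm_le_wnorm_ridge hρ.le X a)) (norm_nonneg _)
  rw [add_sub_add_left_eq_sub]
  calc _ ≤ _ := abs_dotProduct_gram_sub_gram_mulVec_le X Ξ a
    _ ≤ (opNorm Ξ * (W / Real.sqrt ρ)) ^ 2 + 2 * (W * (opNorm Ξ * (W / Real.sqrt ρ))) := by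
      gcongr <;> first | exact vecNorm_nonneg _ | exact wnorm_nonneg _ _
    _ = _ := by
      rw [mul_pow, div_pow, Real.sq_sqrt hρ.le]
      field_simp
      ring
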